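/- arXiv:2503.22523 — 7 statements merged into one kernel-verified Lean document; each statement's English description precedes it below -/
import Mathlib

section
/- Let A : ℝ^d → ℝ^m be linear, g ∈ ℝ^m, μ > 0, and 0 < τ ≤ 2/‖A‖². Define the SQRT-ISTA iteration f_{k+1} = S_{2τμσ_k}(f_k + τA*(g - Af_k)) with σ_k = ‖Af_k - g‖, assuming σ_k > 0 for all k. Then the cost Φ_μ(f) = ‖Af - g‖ + μ‖f‖₁ is nonincreasing along the iterates: Φ_μ(f_{k+1}) ≤ Φ_μ(f_k) for all k. -/
open scoped RealInnerProductSpace BigOperators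

noncomputable def softTh (t x : ℝ) : ℝ :=
  if x ≤ -(t/2) then x + t/2 else if |x| < t/2 then 0 else x - t/2

noncomputable def softThVec {d : ℕ} (t : ℝ) (x : EuclideanSpace ℝ (Fin d)) :
    EuclideanSpace ℝ (Fin d) := WithLp.toLp 2 (fun i => softTh t (x i))

noncomputable def l1 {d : ℕ} (f : EuclideanSpace ℝ (Fin d)) : ℝ := ∑ i, |f i|

/-!
`softThVec t x` minimises the 2-strongly convex function `z ↦ ‖z - x‖² + t ‖z‖₁`, so it beats every
competitor `z` by at least `‖softThVec t x - z‖²`. Taking `z = f_k` and unfolding the Landweber point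
`x = f_k + τ A*(g - A f_k)`, the term `‖f_{k+1} - f_k‖²` pays for the curvature `τ ‖A (f_{k+1} - f_k)‖²`
of the data term once `τ ‖A‖² ≤ 2`. With `t = 2τμσ_k` this gives
`‖A f_{k+1} - g‖² ≤ σ_k² + 2μσ_k (‖f_k‖₁ - ‖f_{k+1}‖₁) ≤ (σ_k + μ (‖f_k‖₁ - ‖f_{k+1}‖₁))²`.
-/

open ContinuousLinearMap

theorem softTh_three_point {t : ℝ} (ht : 0 ≤ t) (x z : ℝ) :
    (softTh t x - x) ^ 2 + t * |softTh t x| + (softTh t x - z) ^ 2 ≤ (z - x) ^ 2 + t * |z| := by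
  unfold softTh
  split_ifs with hneg hsmall
  · rw [abs_of_nonpos (by linarith)]
    rcases abs_cases z with ⟨hz, _⟩ | ⟨hz, _⟩ <;> nlinarith
  · rw [abs_zero]
    rcases abs_cases z with ⟨hz, _⟩ | ⟨hz, _⟩ <;>
      rcases abs_cases x with ⟨hx, _⟩ | ⟨hx, _⟩ <;> nlinarith
  · have hpos : t / 2 ≤ x := by
      rcases abs_cases x with ⟨hx, _⟩ | ⟨hx, _⟩ <;> linarith
    rw [abs_of_nonneg (by linarith)]
    rcases abs_cases z with ⟨hz, _⟩ | ⟨hz, _⟩ <;> nlinarith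

theorem softThVec_three_point {d : ℕ} {t : ℝ} (ht : 0 ≤ t) (x z : EuclideanSpace ℝ (Fin d)) :
    ‖softThVec t x - x‖ ^ 2 + t * l1 (softThVec t x) + ‖softThVec t x - z‖ ^ 2
      ≤ ‖z - x‖ ^ 2 + t * l1 z := by
  simp only [EuclideanSpace.real_norm_sq_eq, l1, Finset.mul_sum, ← Finset.sum_add_distrib]
  exact Finset.sum_le_sum fun i _ => softTh_three_point ht (x i) (z i)

section LeastSquares

variable {E F : Type*} [NormedAddCommGroup E] [InnerProductSpace ℝ E]
  [NormedAddCommGroup F] [InnerProductSpace ℝ F]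

theorem smul_norm_map_sq_le {τ : ℝ} (A : E →L[ℝ] F) (hτ : 0 ≤ τ) (hτA : τ * ‖A‖ ^ 2 ≤ 2) (v : E) :
    τ * ‖A v‖ ^ 2 ≤ 2 * ‖v‖ ^ 2 :=
  calc τ * ‖A v‖ ^ 2 ≤ τ * (‖A‖ * ‖v‖) ^ 2 := by
        gcongr
        exact A.le_opNorm v
    _ = τ * ‖A‖ ^ 2 * ‖v‖ ^ 2 := by ring
    _ ≤ 2 * ‖v‖ ^ 2 := by gcongr

variable [CompleteSpace E] [CompleteSpace F]

/-- The gradient step `f - τ ∇(½‖A · - g‖²)(f)` of the least-squares term. -/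
noncomputable def landweberStep (A : E →L[ℝ] F) (g : F) (τ : ℝ) (f : E) : E :=
  f + τ • adjoint A (g - A f)

theorem norm_sub_landweberStep_sq_sub (A : E →L[ℝ] F) (g : F) (τ : ℝ) (f p : E) :
    ‖p - landweberStep A g τ f‖ ^ 2 - ‖f - landweberStep A g τ f‖ ^ 2
      = ‖p - f‖ ^ 2 + 2 * τ * ⟪A (p - f), A f - g⟫ := by
  have hp : p - landweberStep A g τ f = (p - f) + τ • adjoint A (A f - g) := by
    rw [landweberStep, ← neg_sub (A f), map_neg, smul_neg]; abel
  have hf : f - landweberStep A g τ f = τ • adjoint A (A f - g) := by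
    rw [landweberStep, ← neg_sub (A f), map_neg, smul_neg]; abel
  rw [hp, hf, norm_add_sq_real, real_inner_smul_right, adjoint_inner_right]
  ring

theorem smul_norm_sq_add_le_of_prox_landweberStep {τ : ℝ} (A : E →L[ℝ] F) (g : F) (hτ : 0 ≤ τ)
    (hτA : τ * ‖A‖ ^ 2 ≤ 2) (φ : E → ℝ) {f p : E}
    (hp : ‖p - landweberStep A g τ f‖ ^ 2 + φ p + ‖p - f‖ ^ 2
      ≤ ‖f - landweberStep A g τ f‖ ^ 2 + φ f) :
    τ * ‖A p - g‖ ^ 2 + φ p ≤ τ * ‖A f - g‖ ^ 2 + φ f := by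
  have hstep := norm_sub_landweberStep_sq_sub A g τ f p
  have hcurv := smul_norm_map_sq_le A hτ hτA (p - f)
  have hres : A p - g = (A f - g) + A (p - f) := by rw [map_sub]; abel
  rw [hres, norm_add_sq_real, real_inner_comm]
  linarith

end LeastSquares

theorem le_add_of_sq_le_sq_add_two_mul {a σ e : ℝ} (hσ : 0 < σ)
    (h : a ^ 2 ≤ σ ^ 2 + 2 * σ * e) : a ≤ σ + e := by
  have hsum : 0 ≤ σ + e := by nlinarith
  exact abs_le_of_sq_le_sq' (by nlinarith [sq_nonneg e]) hsum |>.2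

theorem sqrt_ista_cost_nonincreasing {d m : ℕ} (τ μ : ℝ) (hμ : 0 < μ)
    (A : EuclideanSpace ℝ (Fin d) →L[ℝ] EuclideanSpace ℝ (Fin m))
    (g : EuclideanSpace ℝ (Fin m)) (hτ : 0 < τ) (hτ2 : τ ≤ 2 / ‖A‖ ^ 2)
    (f : ℕ → EuclideanSpace ℝ (Fin d)) (σ : ℕ → ℝ)
    (hσ : ∀ k, σ k = ‖A (f k) - g‖) (hσpos : ∀ k, 0 < σ k)
    (hiter : ∀ k, f (k + 1) =
      softThVec (2 * τ * μ * σ k) (f k + τ • (ContinuousLinearMap.adjoint A) (g - A (f k)))) :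
    ∀ k, ‖A (f (k + 1)) - g‖ + μ * l1 (f (k + 1)) ≤ ‖A (f k) - g‖ + μ * l1 (f k) := by
  intro k
  have hτA : τ * ‖A‖ ^ 2 ≤ 2 := by
    rcases (sq_nonneg ‖A‖).eq_or_lt with hA | hA
    · simp [← hA]
    · exact (le_div_iff₀ hA).1 hτ2
  have ht : 0 ≤ 2 * τ * μ * σ k := by have := hσpos k; positivity
  have hstep : f (k + 1) = softThVec (2 * τ * μ * σ k) (landweberStep A g τ (f k)) := hiter k
  have hprox := softThVec_three_point ht (landweberStep A g τ (f k)) (f k)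
  rw [← hstep] at hprox
  have hdescent := smul_norm_sq_add_le_of_prox_landweberStep A g hτ.le hτA
    (fun v => 2 * τ * μ * σ k * l1 v) hprox
  rw [← hσ k] at hdescent ⊢
  have hsq : ‖A (f (k + 1)) - g‖ ^ 2 ≤ σ k ^ 2 + 2 * σ k * (μ * (l1 (f k) - l1 (f (k + 1)))) := by
    nlinarith
  linarith [le_add_of_sq_le_sq_add_two_mul (hσpos k) hsq]
end

section
/- Let τ, μ > 0, A : ℝ^d → ℝ^m linear, g ∈ ℝ^m. Suppose f* ∈ ℝ^d satisfies f* = S_{2τμσ*}(f* + τA*(g - Af*)) with σ* = ‖Af* - g‖ > 0. Then f* is a global minimizer of Φ_μ(f) = ‖Af - g‖ + μ‖f‖₁. -/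
open scoped RealInnerProductSpace BigOperators
open Filter Topology

/-! A fixed point `f* = S_t(f* + τ u)` of the thresholded gradient step says exactly that
`τ u` is a subgradient of `(t/2)‖·‖₁` at `f*`. With `u = A*(g - Af*)` and `t = 2τμσ*`, and
since `-(Af* - g)/σ*` is a subgradient of `‖· - g‖` at `Af*` (Cauchy–Schwarz), this is the
optimality condition `0 ∈ ∂Φ_μ(f*)`; convexity of `Φ_μ` does the rest. -/

lemma softTh_fixed_subgradient {t x y : ℝ} (ht : 0 ≤ t) (h : y = softTh t (y + x)) (z : ℝ) :
    x * (z - y) ≤ t / 2 * (|z| - |y|) := by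
  unfold softTh at h
  split_ifs at h with hneg hmid
  · obtain ⟨rfl, hy⟩ : x = -(t / 2) ∧ y ≤ 0 := ⟨by linarith, by linarith⟩
    rw [abs_of_nonpos hy]
    nlinarith [neg_abs_le z]
  · subst h
    rw [zero_add] at hmid
    calc x * (z - 0) ≤ |x| * |z| := by rw [sub_zero, ← abs_mul]; exact le_abs_self _
      _ ≤ t / 2 * (|z| - |0|) := by
        rw [abs_zero, sub_zero]; exact mul_le_mul_of_nonneg_right hmid.le (abs_nonneg z)
  · have hx : x = t / 2 := by linarith
    subst hx
    have hy : 0 ≤ y := by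
      rcases abs_cases (y + t / 2) with ⟨habs, _⟩ | ⟨habs, _⟩ <;> linarith
    rw [abs_of_nonneg hy]
    nlinarith [le_abs_self z]

lemma inner_sub_le_of_eq_softThVec {d : ℕ} {t : ℝ} {x y : EuclideanSpace ℝ (Fin d)}
    (ht : 0 ≤ t) (h : y = softThVec t (y + x)) (z : EuclideanSpace ℝ (Fin d)) :
    ⟪x, z - y⟫ ≤ t / 2 * (l1 z - l1 y) := by
  have hcoord : ∀ i, x i * (z i - y i) ≤ t / 2 * (|z i| - |y i|) := fun i =>
    softTh_fixed_subgradient ht (congrArg (fun v : EuclideanSpace ℝ (Fin d) => v i) h) (z i)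
  calc ⟪x, z - y⟫ = ∑ i, x i * (z i - y i) := by
        simp only [PiLp.inner_apply, RCLike.inner_apply, conj_trivial, PiLp.sub_apply, mul_comm]
    _ ≤ ∑ i, t / 2 * (|z i| - |y i|) := Finset.sum_le_sum fun i _ => hcoord i
    _ = t / 2 * (l1 z - l1 y) := by rw [← Finset.mul_sum, Finset.sum_sub_distrib]; rfl

lemma norm_mul_norm_add_inner_sub_le {F : Type*} [NormedAddCommGroup F] [InnerProductSpace ℝ F]
    (r₀ r : F) : ‖r₀‖ * ‖r₀‖ + ⟪r₀, r - r₀⟫ ≤ ‖r₀‖ * ‖r‖ := by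
  rw [inner_sub_right, real_inner_self_eq_norm_mul_norm, add_sub_cancel]
  exact real_inner_le_norm r₀ r

theorem fixed_point_is_minimizer {d m : ℕ} (τ μ : ℝ) (hτ : 0 < τ) (hμ : 0 < μ)
    (A : EuclideanSpace ℝ (Fin d) →L[ℝ] EuclideanSpace ℝ (Fin m))
    (g : EuclideanSpace ℝ (Fin m)) (fstar : EuclideanSpace ℝ (Fin d))
    (hσpos : 0 < ‖A fstar - g‖)
    (hfix : fstar = softThVec (2 * τ * μ * ‖A fstar - g‖)
      (fstar + τ • (ContinuousLinearMap.adjoint A) (g - A fstar))) :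
    ∀ f, ‖A fstar - g‖ + μ * l1 fstar ≤ ‖A f - g‖ + μ * l1 f := by
  intro f
  set σ := ‖A fstar - g‖
  have hl1 := inner_sub_le_of_eq_softThVec (by positivity) hfix f
  have hinner : ⟪τ • (ContinuousLinearMap.adjoint A) (g - A fstar), f - fstar⟫
      = -τ * ⟪A fstar - g, (A f - g) - (A fstar - g)⟫ := by
    rw [real_inner_smul_left, ContinuousLinearMap.adjoint_inner_left, ← neg_sub (A fstar) g,
      inner_neg_left, map_sub, sub_sub_sub_cancel_right]
    ring
  have hopt : -⟪A fstar - g, (A f - g) - (A fstar - g)⟫ ≤ σ * (μ * (l1 f - l1 fstar)) := by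
    rw [hinner] at hl1
    refine le_of_mul_le_mul_left ?_ hτ
    linarith
  have hfit := norm_mul_norm_add_inner_sub_le (A fstar - g) (A f - g)
  have hσ : σ * (σ - ‖A f - g‖) ≤ σ * (μ * (l1 f - l1 fstar)) := by linarith
  linarith [le_of_mul_le_mul_left hσ hσpos]
end

section
/- Let A : ℝ^d → ℝ^m be linear, g ∈ ℝ^m, f* ∈ ℝ^d with ‖Af* - g‖ > 0, and μ > 0. Then f* is a global minimizer of the square-root Lasso cost ‖Af - g‖ + μ‖f‖₁ if and only if f* is a global minimizer of the Lasso cost ‖Af - g‖² + μ̃‖f‖₁ with μ̃ = 2μ‖Af* - g‖. -/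
/-!
Forward: the tangent-line bound `n² ≥ r² + 2r(n - r)` of the square turns the square-root Lasso
inequality, multiplied by `2r` with `r = ‖Af* - g‖`, into the Lasso one.
Backward: both costs are convex, so comparing the Lasso cost at `f*` with its value at
`f* + t(f - f*)` and letting `t → 0⁺` gives `2r (‖Af - g‖ - r + μ(‖f‖₁ - ‖f*‖₁)) ≥ 0`, the
directional derivative of the Lasso cost being `2r` times that of the square-root Lasso cost.
-/

open scoped RealInnerProductSpace BigOperators
open Filter Topology

open Set

lemma nonneg_of_forall_Ioc_nonneg_add_mul {α β : ℝ} (h : ∀ t ∈ Ioc (0 : ℝ) 1, 0 ≤ α + t * β) :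
    0 ≤ α := by
  have hlim : Tendsto (fun t : ℝ => α + t * β) (𝓝[>] 0) (𝓝 α) := by
    have hcont : Continuous fun t : ℝ => α + t * β := by fun_prop
    simpa using (hcont.tendsto 0).mono_left nhdsWithin_le_nhds
  exact ge_of_tendsto hlim (eventually_of_mem (Ioc_mem_nhdsGT zero_lt_one) h)

lemma isMinOn_sq_add_of_isMinOn_add {α : Type*} {N L : α → ℝ} {μ : ℝ} {x₀ : α} (hN : 0 ≤ N x₀)
    (h : IsMinOn (fun x => N x + μ * L x) univ x₀) :
    IsMinOn (fun x => N x ^ 2 + (2 * μ * N x₀) * L x) univ x₀ := by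
  rw [isMinOn_univ_iff] at h ⊢
  intro x
  nlinarith [h x, sq_nonneg (N x - N x₀)]

section Convex

variable {E : Type*} [AddCommGroup E] [Module ℝ E] {N L : E → ℝ} {μ : ℝ} {x₀ : E}

lemma isMinOn_add_of_isMinOn_sq_add (hN : ConvexOn ℝ univ N) (hN_nonneg : ∀ x, 0 ≤ N x)
    (hL : ConvexOn ℝ univ L) (hμ : 0 ≤ μ) (hx₀ : 0 < N x₀)
    (h : IsMinOn (fun x => N x ^ 2 + (2 * μ * N x₀) * L x) univ x₀) :
    IsMinOn (fun x => N x + μ * L x) univ x₀ := by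
  rw [isMinOn_univ_iff] at h ⊢
  intro x
  set r := N x₀
  have hseg : ∀ t ∈ Ioc (0 : ℝ) 1,
      0 ≤ 2 * r * (N x - r + μ * (L x - L x₀)) + t * (N x - r) ^ 2 := by
    rintro t ⟨ht0, ht1⟩
    have hN_seg := hN.2 (mem_univ x₀) (mem_univ x) (sub_nonneg.2 ht1) ht0.le (by ring)
    have hL_seg := hL.2 (mem_univ x₀) (mem_univ x) (sub_nonneg.2 ht1) ht0.le (by ring)
    simp only [smul_eq_mul] at hN_seg hL_seg
    have hN_sq := pow_le_pow_left₀ (hN_nonneg _) hN_seg 2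
    have hL_scaled := mul_le_mul_of_nonneg_left hL_seg (by positivity : 0 ≤ 2 * μ * r)
    have hmul : 0 ≤ t * (2 * r * (N x - r + μ * (L x - L x₀)) + t * (N x - r) ^ 2) := by
      nlinarith [h ((1 - t) • x₀ + t • x)]
    exact nonneg_of_mul_nonneg_right hmul ht0
  have hdir := nonneg_of_mul_nonneg_right (nonneg_of_forall_Ioc_nonneg_add_mul hseg)
    (by positivity : 0 < 2 * r)
  linarith

theorem isMinOn_add_iff_isMinOn_sq_add (hN : ConvexOn ℝ univ N) (hN_nonneg : ∀ x, 0 ≤ N x)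
    (hL : ConvexOn ℝ univ L) (hμ : 0 ≤ μ) (hx₀ : 0 < N x₀) :
    IsMinOn (fun x => N x + μ * L x) univ x₀ ↔
      IsMinOn (fun x => N x ^ 2 + (2 * μ * N x₀) * L x) univ x₀ :=
  ⟨isMinOn_sq_add_of_isMinOn_add hx₀.le, isMinOn_add_of_isMinOn_sq_add hN hN_nonneg hL hμ hx₀⟩

end Convex

lemma convexOn_norm_map_sub {E F : Type*} [NormedAddCommGroup E] [NormedSpace ℝ E]
    [NormedAddCommGroup F] [NormedSpace ℝ F] (A : E →L[ℝ] F) (g : F) :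
    ConvexOn ℝ univ fun x => ‖A x - g‖ := by
  simpa [Function.comp_def, sub_eq_neg_add] using
    (convexOn_univ_norm.translate_right (-g)).comp_linearMap (A : E →ₗ[ℝ] F)

lemma convexOn_l1 {d : ℕ} : ConvexOn ℝ univ (l1 (d := d)) := by
  refine ⟨convex_univ, fun x _ y _ a b ha hb hab => ?_⟩
  simp only [l1, smul_eq_mul, Finset.mul_sum, ← Finset.sum_add_distrib]
  refine Finset.sum_le_sum fun i _ => ?_
  simpa [Real.norm_eq_abs] using
    (convexOn_univ_norm (E := ℝ)).2 (mem_univ (x i)) (mem_univ (y i)) ha hb hab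

theorem sqrt_lasso_iff_lasso_minimizer {d m : ℕ} (μ : ℝ) (hμ : 0 < μ)
    (A : EuclideanSpace ℝ (Fin d) →L[ℝ] EuclideanSpace ℝ (Fin m))
    (g : EuclideanSpace ℝ (Fin m)) (fstar : EuclideanSpace ℝ (Fin d))
    (hres : 0 < ‖A fstar - g‖) :
    (∀ f, ‖A fstar - g‖ + μ * l1 fstar ≤ ‖A f - g‖ + μ * l1 f) ↔
      (∀ f, ‖A fstar - g‖ ^ 2 + (2 * μ * ‖A fstar - g‖) * l1 fstar ≤
        ‖A f - g‖ ^ 2 + (2 * μ * ‖A fstar - g‖) * l1 f) := by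
  simpa only [isMinOn_univ_iff] using
    isMinOn_add_iff_isMinOn_sq_add (convexOn_norm_map_sub A g) (fun _ => norm_nonneg _)
      convexOn_l1 hμ.le hres
end

section
/- Let {f_k}, {σ_k} be the SQRT-ISTA iterates with σ_k > 0 for all k. Then there is a constant C ≥ 1, independent of k, such that σ_{k+1} ≤ C·σ_k for all k; specifically σ_{k+1} ≤ (1 + τ‖A‖² + √d·τμ‖A‖)·σ_k. -/
open scoped RealInnerProductSpace BigOperators
open Filter Topology

/-! Each SQRT-ISTA step moves `f_k` by at most `τ‖A‖σ_k` (the gradient step) plus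
`√d τ μ σ_k` (the soft-thresholding with threshold `2τμσ_k`). Since `A` is `‖A‖`-Lipschitz,
the residual `σ_{k+1} = ‖A f_{k+1} - g‖` exceeds `σ_k` by at most `‖A‖` times that distance. -/

theorem EuclideanSpace.norm_le_sqrt_card_mul {ι 𝕜 : Type*} [Fintype ι] [RCLike 𝕜]
    {x : EuclideanSpace 𝕜 ι} {c : ℝ} (h : ∀ i, ‖x i‖ ≤ c) :
    ‖x‖ ≤ √(Fintype.card ι) * c := by
  rcases isEmpty_or_nonempty ι with hι | ⟨⟨i₀⟩⟩
  · simp [Subsingleton.elim x 0]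
  have hc : 0 ≤ c := (norm_nonneg _).trans (h i₀)
  calc ‖x‖ = √(∑ i, ‖x i‖ ^ 2) := EuclideanSpace.norm_eq x
    _ ≤ √(∑ _i : ι, c ^ 2) :=
        Real.sqrt_le_sqrt (Finset.sum_le_sum fun i _ => pow_le_pow_left₀ (norm_nonneg _) (h i) 2)
    _ = √(Fintype.card ι) * c := by
        rw [Finset.sum_const, Finset.card_univ, nsmul_eq_mul, Real.sqrt_mul (Nat.cast_nonneg _),
          Real.sqrt_sq hc]

theorem abs_softTh_sub_le (t x : ℝ) : |softTh t x - x| ≤ |t| / 2 := by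
  unfold softTh
  split_ifs with h₁ h₂ <;> cases abs_cases t <;> cases abs_cases x <;>
    simp only [add_sub_cancel_left, zero_sub, abs_neg, sub_sub_cancel_left, abs_div,
      abs_two] <;> linarith

theorem norm_softThVec_sub_le {d : ℕ} (t : ℝ) (x : EuclideanSpace ℝ (Fin d)) :
    ‖softThVec t x - x‖ ≤ √d * (|t| / 2) := by
  simpa using EuclideanSpace.norm_le_sqrt_card_mul (x := softThVec t x - x)
    fun i => by simpa [softThVec] using abs_softTh_sub_le t (x i)

section ProximalGradientStep

variable {E F : Type*} [NormedAddCommGroup E] [InnerProductSpace ℝ E] [CompleteSpace E]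
  [NormedAddCommGroup F] [InnerProductSpace ℝ F] [CompleteSpace F]

theorem norm_gradientStep_sub_le (A : E →L[ℝ] F) (f : E) (g : F) {τ : ℝ} (hτ : 0 ≤ τ) :
    ‖f + τ • ContinuousLinearMap.adjoint A (g - A f) - f‖ ≤ τ * ‖A‖ * ‖A f - g‖ := by
  rw [add_sub_cancel_left, norm_smul, Real.norm_of_nonneg hτ, mul_assoc, norm_sub_rev (A f),
    ← LinearIsometryEquiv.norm_map ContinuousLinearMap.adjoint A]
  exact mul_le_mul_of_nonneg_left (ContinuousLinearMap.le_opNorm _ _) hτ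

theorem norm_residual_le_of_proximalStep (A : E →L[ℝ] F) {f f' : E} {g : F} {τ ε : ℝ}
    (hτ : 0 ≤ τ) (hstep : ‖f' - (f + τ • ContinuousLinearMap.adjoint A (g - A f))‖ ≤ ε) :
    ‖A f' - g‖ ≤ (1 + τ * ‖A‖ ^ 2) * ‖A f - g‖ + ‖A‖ * ε := by
  set u := f + τ • ContinuousLinearMap.adjoint A (g - A f)
  have hmove : ‖f' - f‖ ≤ ε + τ * ‖A‖ * ‖A f - g‖ :=
    calc ‖f' - f‖ ≤ ‖f' - u‖ + ‖u - f‖ := norm_sub_le_norm_sub_add_norm_sub _ _ _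
      _ ≤ ε + τ * ‖A‖ * ‖A f - g‖ := add_le_add hstep (norm_gradientStep_sub_le A f g hτ)
  calc ‖A f' - g‖ = ‖(A f - g) + A (f' - f)‖ := by rw [map_sub]; abel_nf
    _ ≤ ‖A f - g‖ + ‖A‖ * ‖f' - f‖ := (norm_add_le _ _).trans (by gcongr; exact A.le_opNorm _)
    _ ≤ ‖A f - g‖ + ‖A‖ * (ε + τ * ‖A‖ * ‖A f - g‖) := by gcongr
    _ = (1 + τ * ‖A‖ ^ 2) * ‖A f - g‖ + ‖A‖ * ε := by ring

end ProximalGradientStep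

theorem sqrt_ista_residual_ratio_bounded_general {d m : ℕ} (τ μ : ℝ) (hτ : 0 < τ) (hμ : 0 < μ)
    (A : EuclideanSpace ℝ (Fin d) →L[ℝ] EuclideanSpace ℝ (Fin m))
    (g : EuclideanSpace ℝ (Fin m))
    (f : ℕ → EuclideanSpace ℝ (Fin d)) (σ : ℕ → ℝ)
    (hσ : ∀ k, σ k = ‖A (f k) - g‖)
    (hiter : ∀ k, f (k + 1) =
      softThVec (2 * τ * μ * σ k) (f k + τ • (ContinuousLinearMap.adjoint A) (g - A (f k)))) :
    (∃ C : ℝ, 1 ≤ C ∧ ∀ k, σ (k + 1) ≤ C * σ k) ∧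
      ∀ k, σ (k + 1) ≤ (1 + τ * ‖A‖ ^ 2 + Real.sqrt d * τ * μ * ‖A‖) * σ k := by
  have hstep : ∀ k, σ (k + 1) ≤ (1 + τ * ‖A‖ ^ 2 + Real.sqrt d * τ * μ * ‖A‖) * σ k := by
    intro k
    have hσk : 0 ≤ σ k := hσ k ▸ norm_nonneg _
    have hprox := norm_softThVec_sub_le (2 * τ * μ * σ k)
      (f k + τ • ContinuousLinearMap.adjoint A (g - A (f k)))
    rw [← hiter k, abs_of_nonneg (by positivity)] at hprox
    calc σ (k + 1) ≤ (1 + τ * ‖A‖ ^ 2) * σ k + ‖A‖ * (√d * (2 * τ * μ * σ k / 2)) := by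
          simpa only [← hσ] using norm_residual_le_of_proximalStep A hτ.le hprox
      _ = (1 + τ * ‖A‖ ^ 2 + √d * τ * μ * ‖A‖) * σ k := by ring
  refine ⟨⟨_, ?_, hstep⟩, hstep⟩
  have : 0 ≤ τ * ‖A‖ ^ 2 + √d * τ * μ * ‖A‖ := by positivity
  linarith

theorem sqrt_ista_residual_ratio_bounded {d m : ℕ} (τ μ : ℝ) (hτ : 0 < τ) (hμ : 0 < μ)
    (A : EuclideanSpace ℝ (Fin d) →L[ℝ] EuclideanSpace ℝ (Fin m))
    (g : EuclideanSpace ℝ (Fin m))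
    (f : ℕ → EuclideanSpace ℝ (Fin d)) (σ : ℕ → ℝ)
    (hσ : ∀ k, σ k = ‖A (f k) - g‖) (hσpos : ∀ k, 0 < σ k)
    (hiter : ∀ k, f (k + 1) =
      softThVec (2 * τ * μ * σ k) (f k + τ • (ContinuousLinearMap.adjoint A) (g - A (f k)))) :
    (∃ C : ℝ, 1 ≤ C ∧ ∀ k, σ (k + 1) ≤ C * σ k) ∧
      ∀ k, σ (k + 1) ≤ (1 + τ * ‖A‖ ^ 2 + Real.sqrt d * τ * μ * ‖A‖) * σ k :=
  sqrt_ista_residual_ratio_bounded_general τ μ hτ hμ A g f σ hσ hiter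
end

section
/- Along the SQRT-ISTA iteration, the distance from 0 to the subdifferential of Φ_μ at f_{k+1} is bounded: dist(0, ∂Φ_μ(f_{k+1})) ≤ (1/τ + 2‖A‖²)·‖f_{k+1} - f_k‖/σ_k, provided σ_k, σ_{k+1} > 0. -/
open scoped RealInnerProductSpace BigOperators
open Filter Topology

/-!
With `r j = A (f j) - g`, the soft-thresholding step is the proximal step of `τ μ σ k ‖·‖₁`, so
`(f k + τ A* (g - A (f k)) - f (k+1)) / (τ σ k)` is a subgradient of `μ ‖·‖₁` at `f (k+1)`; adding
the subgradient `A* (r (k+1) / σ (k+1))` of `y ↦ ‖A y - g‖` gives an element of `∂Φ_μ (f (k+1))`.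
Since `τ A* (g - A (f k)) = -τ σ k A* (r k / σ k)`, this element equals
`(f k - f (k+1)) / (τ σ k) + A* (r (k+1) / σ (k+1) - r k / σ k)`, and the last difference of unit
vectors is at most `2 ‖r (k+1) - r k‖ / σ k ≤ 2 ‖A‖ ‖f (k+1) - f k‖ / σ k`.
-/

open scoped InnerProduct

def subdifferential {E : Type*} [NormedAddCommGroup E] [InnerProductSpace ℝ E]
    (φ : E → ℝ) (x : E) : Set E :=
  {w | ∀ y, φ x + ⟪w, y - x⟫ ≤ φ y}

section Subdifferential

variable {E F : Type*} [NormedAddCommGroup E] [InnerProductSpace ℝ E]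
  [NormedAddCommGroup F] [InnerProductSpace ℝ F]

theorem add_mem_subdifferential_add {φ ψ : E → ℝ} {x w v : E}
    (hw : w ∈ subdifferential φ x) (hv : v ∈ subdifferential ψ x) :
    w + v ∈ subdifferential (fun y => φ y + ψ y) x := fun y => by
  have := hw y
  have := hv y
  rw [inner_add_left]
  linarith

theorem smul_mem_subdifferential {φ : E → ℝ} {x w : E} {c : ℝ} (hc : 0 ≤ c)
    (hw : w ∈ subdifferential φ x) : c • w ∈ subdifferential (fun y => c * φ y) x := fun y => by
  have := mul_le_mul_of_nonneg_left (hw y) hc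
  rw [real_inner_smul_left]
  linarith

theorem inv_norm_smul_mem_subdifferential_norm (u : E) :
    ‖u‖⁻¹ • u ∈ subdifferential (‖·‖) u := fun v => by
  rcases eq_or_ne u 0 with rfl | hu
  · simp
  have hu' : 0 < ‖u‖ := norm_pos_iff.mpr hu
  rw [real_inner_smul_left, inner_sub_right, real_inner_self_eq_norm_sq]
  have := real_inner_le_norm u v
  rw [← sub_nonneg] at this ⊢
  have key : ‖v‖ - (‖u‖ + ‖u‖⁻¹ * (⟪u, v⟫ - ‖u‖ ^ 2)) = ‖u‖⁻¹ * (‖u‖ * ‖v‖ - ⟪u, v⟫) := by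
    field_simp
    ring
  rw [key]
  positivity

theorem adjoint_mem_subdifferential_comp_sub [CompleteSpace E] [CompleteSpace F]
    (A : E →L[ℝ] F) (g : F) {φ : F → ℝ} {x : E} {w : F}
    (hw : w ∈ subdifferential φ (A x - g)) :
    (A†) w ∈ subdifferential (fun y => φ (A y - g)) x := fun y => by
  have := hw (A y - g)
  rwa [sub_sub_sub_cancel_right, ← map_sub, ← ContinuousLinearMap.adjoint_inner_left] at this

end Subdifferential

section SoftThreshold

variable {t : ℝ}

theorem abs_sub_softTh_le (ht : 0 ≤ t) (p : ℝ) : |p - softTh t p| ≤ t / 2 := by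
  unfold softTh
  split_ifs with h₁ h₂ <;> rw [abs_le]
  · constructor <;> linarith
  · obtain ⟨_, _⟩ := abs_lt.mp h₂
    constructor <;> linarith
  · constructor <;> linarith

theorem sub_softTh_mul_softTh (p : ℝ) : (p - softTh t p) * softTh t p = t / 2 * |softTh t p| := by
  unfold softTh
  split_ifs with h₁ h₂
  · rw [abs_of_nonpos (by linarith)]
    ring
  · simp
  · have hp : t / 2 ≤ p := (le_abs.mp (not_lt.mp h₂)).resolve_right fun h => h₁ (by linarith)
    rw [abs_of_nonneg (by linarith)]
    ring

theorem softTh_subgradient (ht : 0 ≤ t) (p y : ℝ) :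
    t / 2 * |softTh t p| + (p - softTh t p) * (y - softTh t p) ≤ t / 2 * |y| :=
  calc t / 2 * |softTh t p| + (p - softTh t p) * (y - softTh t p)
      = (p - softTh t p) * y := by rw [mul_sub, sub_softTh_mul_softTh]; ring
    _ ≤ |p - softTh t p| * |y| := by rw [← abs_mul]; exact le_abs_self _
    _ ≤ t / 2 * |y| := by gcongr; exact abs_sub_softTh_le ht p

theorem sub_softThVec_mem_subdifferential_l1 {d : ℕ} (ht : 0 ≤ t) (p : EuclideanSpace ℝ (Fin d)) :
    p - softThVec t p ∈ subdifferential (fun y => t / 2 * l1 y) (softThVec t p) := fun y => by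
  simp only [l1, Finset.mul_sum, PiLp.inner_apply, ← Finset.sum_add_distrib]
  gcongr with i
  simpa [softThVec, mul_comm] using softTh_subgradient ht (p i) (y i)

end SoftThreshold

theorem norm_inv_norm_smul_sub_le {V : Type*} [NormedAddCommGroup V] [NormedSpace ℝ V]
    (u : V) {v : V} (hv : v ≠ 0) : ‖‖u‖⁻¹ • u - ‖v‖⁻¹ • v‖ ≤ 2 * ‖u - v‖ / ‖v‖ := by
  have hv' : 0 < ‖v‖ := norm_pos_iff.mpr hv
  have hsplit : ‖u‖⁻¹ • u - ‖v‖⁻¹ • v = ‖v‖⁻¹ • (u - v) + (‖u‖⁻¹ - ‖v‖⁻¹) • u := by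
    rw [smul_sub, sub_smul]
    abel
  have hcoeff : ‖(‖u‖⁻¹ - ‖v‖⁻¹) • u‖ ≤ ‖u - v‖ / ‖v‖ := by
    rcases eq_or_ne u 0 with rfl | hu
    · simp only [smul_zero, norm_zero]
      positivity
    have hu' : 0 < ‖u‖ := norm_pos_iff.mpr hu
    calc ‖(‖u‖⁻¹ - ‖v‖⁻¹) • u‖ = |‖v‖ - ‖u‖| / ‖v‖ := by
          rw [norm_smul, Real.norm_eq_abs, inv_sub_inv hu'.ne' hv'.ne', abs_div,
            abs_of_pos (mul_pos hu' hv')]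
          field_simp
      _ ≤ ‖u - v‖ / ‖v‖ := by
          gcongr
          rw [norm_sub_rev]
          exact abs_norm_sub_norm_le v u
  calc ‖‖u‖⁻¹ • u - ‖v‖⁻¹ • v‖
      ≤ ‖‖v‖⁻¹ • (u - v)‖ + ‖(‖u‖⁻¹ - ‖v‖⁻¹) • u‖ := hsplit ▸ norm_add_le _ _
    _ ≤ ‖u - v‖ / ‖v‖ + ‖u - v‖ / ‖v‖ := by
        gcongr
        rw [norm_smul, norm_inv, norm_norm, inv_mul_eq_div]
    _ = 2 * ‖u - v‖ / ‖v‖ := by ring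

section SqrtIsta

variable {E F : Type*} [NormedAddCommGroup E] [InnerProductSpace ℝ E] [CompleteSpace E]
  [NormedAddCommGroup F] [InnerProductSpace ℝ F] [CompleteSpace F]

noncomputable def sqrtIstaSubgradient (τ : ℝ) (A : E →L[ℝ] F) (g : F) (x₀ x₁ : E) : E :=
  (A†) (‖A x₁ - g‖⁻¹ • (A x₁ - g)) + (τ * ‖A x₀ - g‖)⁻¹ • (x₀ + τ • (A†) (g - A x₀) - x₁)

theorem sqrtIstaSubgradient_eq {τ : ℝ} (hτ : τ ≠ 0) (A : E →L[ℝ] F) {g : F} {x₀ : E}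
    (hx₀ : A x₀ ≠ g) (x₁ : E) :
    sqrtIstaSubgradient τ A g x₀ x₁ = (τ * ‖A x₀ - g‖)⁻¹ • (x₀ - x₁) +
      (A†) (‖A x₁ - g‖⁻¹ • (A x₁ - g) - ‖A x₀ - g‖⁻¹ • (A x₀ - g)) := by
  have hr₀ : ‖A x₀ - g‖ ≠ 0 := norm_ne_zero_iff.mpr (sub_ne_zero.mpr hx₀)
  rw [sqrtIstaSubgradient, ← neg_sub (A x₀)]
  simp only [map_sub, map_neg, map_smul, smul_sub, smul_add, smul_neg, smul_smul]
  match_scalars <;> field_simp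
  ring

theorem norm_sqrtIstaSubgradient_le {τ : ℝ} (hτ : 0 < τ) (A : E →L[ℝ] F) {g : F} {x₀ : E}
    (hx₀ : A x₀ ≠ g) (x₁ : E) :
    ‖sqrtIstaSubgradient τ A g x₀ x₁‖ ≤ (1 / τ + 2 * ‖A‖ ^ 2) * ‖x₁ - x₀‖ / ‖A x₀ - g‖ := by
  rw [sqrtIstaSubgradient_eq hτ.ne' A hx₀]
  set r₀ := A x₀ - g
  set r₁ := A x₁ - g
  have hr₀ : r₀ ≠ 0 := sub_ne_zero.mpr hx₀
  have hres : ‖r₁ - r₀‖ ≤ ‖A‖ * ‖x₁ - x₀‖ := by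
    rw [sub_sub_sub_cancel_right, ← map_sub]
    exact A.le_opNorm _
  calc ‖(τ * ‖r₀‖)⁻¹ • (x₀ - x₁) + (A†) (‖r₁‖⁻¹ • r₁ - ‖r₀‖⁻¹ • r₀)‖
      ≤ ‖(τ * ‖r₀‖)⁻¹ • (x₀ - x₁)‖ + ‖(A†) (‖r₁‖⁻¹ • r₁ - ‖r₀‖⁻¹ • r₀)‖ := norm_add_le _ _
    _ ≤ (τ * ‖r₀‖)⁻¹ * ‖x₁ - x₀‖ + ‖A‖ * (2 * (‖A‖ * ‖x₁ - x₀‖) / ‖r₀‖) := by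
        gcongr
        · rw [norm_smul, norm_inv, norm_mul, Real.norm_of_nonneg hτ.le, norm_norm,
            norm_sub_rev x₀]
        · calc ‖(A†) (‖r₁‖⁻¹ • r₁ - ‖r₀‖⁻¹ • r₀)‖ ≤ ‖A†‖ * ‖‖r₁‖⁻¹ • r₁ - ‖r₀‖⁻¹ • r₀‖ :=
                (A†).le_opNorm _
            _ ≤ ‖A‖ * (2 * (‖A‖ * ‖x₁ - x₀‖) / ‖r₀‖) := by
                rw [LinearIsometryEquiv.norm_map]
                gcongr
                exact (norm_inv_norm_smul_sub_le r₁ hr₀).trans (by gcongr)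
    _ = (1 / τ + 2 * ‖A‖ ^ 2) * ‖x₁ - x₀‖ / ‖r₀‖ := by
        field_simp

theorem sqrtIstaSubgradient_mem_subdifferential {d m : ℕ} {τ μ : ℝ} (hτ : 0 < τ) (hμ : 0 ≤ μ)
    (A : EuclideanSpace ℝ (Fin d) →L[ℝ] EuclideanSpace ℝ (Fin m)) {g : EuclideanSpace ℝ (Fin m)}
    {x₀ x₁ : EuclideanSpace ℝ (Fin d)} (hx₀ : A x₀ ≠ g)
    (hx₁ : x₁ = softThVec (2 * τ * μ * ‖A x₀ - g‖) (x₀ + τ • (A†) (g - A x₀))) :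
    sqrtIstaSubgradient τ A g x₀ x₁ ∈ subdifferential (fun y => ‖A y - g‖ + μ * l1 y) x₁ := by
  have hr₀ : 0 < ‖A x₀ - g‖ := norm_pos_iff.mpr (sub_ne_zero.mpr hx₀)
  have hs : 0 < τ * ‖A x₀ - g‖ := mul_pos hτ hr₀
  have hl1 := smul_mem_subdifferential (inv_nonneg.mpr hs.le)
    (sub_softThVec_mem_subdifferential_l1 (by positivity : 0 ≤ 2 * τ * μ * ‖A x₀ - g‖)
      (x₀ + τ • (A†) (g - A x₀)))
  rw [← hx₁] at hl1
  have hrescale : (fun y : EuclideanSpace ℝ (Fin d) =>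
      (τ * ‖A x₀ - g‖)⁻¹ * (2 * τ * μ * ‖A x₀ - g‖ / 2 * l1 y)) = fun y => μ * l1 y := by
    funext y
    field_simp
  rw [hrescale] at hl1
  exact add_mem_subdifferential_add
    (adjoint_mem_subdifferential_comp_sub A g (inv_norm_smul_mem_subdifferential_norm _)) hl1

end SqrtIsta

theorem sqrt_ista_subdiff_bound {d m : ℕ} (τ μ : ℝ) (hτ : 0 < τ) (hμ : 0 < μ)
    (A : EuclideanSpace ℝ (Fin d) →L[ℝ] EuclideanSpace ℝ (Fin m))
    (g : EuclideanSpace ℝ (Fin m))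
    (f : ℕ → EuclideanSpace ℝ (Fin d)) (σ : ℕ → ℝ)
    (hσ : ∀ k, σ k = ‖A (f k) - g‖) (hσpos : ∀ k, 0 < σ k)
    (hiter : ∀ k, f (k + 1) =
      softThVec (2 * τ * μ * σ k) (f k + τ • (ContinuousLinearMap.adjoint A) (g - A (f k)))) :
    ∀ k, Metric.infDist 0
        {w : EuclideanSpace ℝ (Fin d) | ∀ y,
          ‖A y - g‖ + μ * l1 y ≥ ‖A (f (k + 1)) - g‖ + μ * l1 (f (k + 1)) + ⟪w, y - f (k + 1)⟫} ≤
      (1 / τ + 2 * ‖A‖ ^ 2) * ‖f (k + 1) - f k‖ / σ k := by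
  intro k
  have hres : A (f k) ≠ g := sub_ne_zero.mp (norm_pos_iff.mp (hσ k ▸ hσpos k))
  have hmem := sqrtIstaSubgradient_mem_subdifferential hτ hμ.le A hres (hσ k ▸ hiter k)
  refine (Metric.infDist_le_dist_of_mem hmem).trans ?_
  rw [dist_zero_left, hσ k]
  exact norm_sqrtIstaSubgradient_le hτ A hres _
end

section
/- (Convergence rate) Let {f_k} be SQRT-ISTA iterates with 0 < τ ≤ 1/‖A‖² and σ_k ≥ σ_min > 0 for all k, and suppose f_k → f*, a minimizer of Φ_μ. Then for all k ≥ 1, Φ_μ(f_k) - Φ_μ(f*) ≤ ‖f_0 - f*‖²/(2τσ_min·k). -/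
open scoped RealInnerProductSpace BigOperators
open Filter Topology

/-!
The SQRT-ISTA step is a proximal gradient step for `Φ_μ` with the smooth part linearised at the
current residual `σ_k = ‖A f_k - g‖`. The variational inequality of soft thresholding, the
three-point identity and `‖A‖²`-smoothness of the residual give the one-step estimate
`‖f_{k+1} - u‖² ≤ ‖f_k - u‖² + 2τσ_k (Φ_μ u - Φ_μ f_{k+1})`. Taking `u = f_k` shows that `Φ_μ`
decreases along the iterates; taking `u = f*` and `σ_k ≥ σ_min` shows that the squared distance
to `f*` drops by at least `2τσ_min (Φ_μ f_{k+1} - Φ_μ f*)` per step, and summing these `k`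
telescoping decrements against the monotone gaps gives the `O(1/k)` rate.
-/

/-- `softTh t x` is the proximal point of `(t/2)|·|` at `x`. -/
theorem softTh_variational_ineq {t : ℝ} (ht : 0 ≤ t) (x v : ℝ) :
    (x - softTh t x) * (v - softTh t x) ≤ t / 2 * |v| - t / 2 * |softTh t x| := by
  unfold softTh
  split_ifs with hneg hsmall
  · rw [abs_of_nonpos (show x + t / 2 ≤ 0 by linarith)]
    nlinarith [neg_abs_le v]
  · simp only [abs_zero, sub_zero, mul_zero]
    nlinarith [le_abs_self (x * v), abs_mul x v, abs_nonneg v, abs_nonneg x]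
  · have hx : t / 2 ≤ x := by
      cases abs_cases x <;> linarith
    rw [abs_of_nonneg (show 0 ≤ x - t / 2 by linarith)]
    nlinarith [le_abs_self v]

theorem softThVec_variational_ineq {d : ℕ} {t : ℝ} (ht : 0 ≤ t)
    (y u : EuclideanSpace ℝ (Fin d)) :
    ⟪y - softThVec t y, u - softThVec t y⟫ ≤ t / 2 * l1 u - t / 2 * l1 (softThVec t y) := by
  simp only [PiLp.inner_apply, RCLike.inner_apply, conj_trivial, PiLp.sub_apply, l1,
    Finset.mul_sum, ← Finset.sum_sub_distrib]
  exact Finset.sum_le_sum fun i _ => (mul_comm _ _).trans_le (softTh_variational_ineq ht _ _)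

theorem norm_mul_norm_sub_le_inner {F : Type*} [NormedAddCommGroup F] [InnerProductSpace ℝ F]
    (r s : F) : ‖r‖ * ‖s‖ - ‖r - s‖ ^ 2 / 2 ≤ ⟪r, s⟫ := by
  nlinarith [norm_sub_sq_real r s, sq_nonneg (‖r‖ - ‖s‖)]

theorem natCast_mul_le_sub_of_antitone {ψ e : ℕ → ℝ} (hψ : Antitone ψ)
    (hdec : ∀ j, ψ (j + 1) ≤ e j - e (j + 1)) (k : ℕ) : k * ψ k ≤ e 0 - e k := by
  induction k with
  | zero => simp
  | succ k ih =>
    have hk : (k : ℝ) * ψ (k + 1) ≤ k * ψ k :=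
      mul_le_mul_of_nonneg_left (hψ k.le_succ) k.cast_nonneg
    push_cast
    linarith [hdec k]

section SqrtIsta

variable {d : ℕ} {F : Type*} [NormedAddCommGroup F] [InnerProductSpace ℝ F] [CompleteSpace F]
  (A : EuclideanSpace ℝ (Fin d) →L[ℝ] F) (g : F)

noncomputable def sqrtLasso (μ : ℝ) (h : EuclideanSpace ℝ (Fin d)) : ℝ :=
  ‖A h - g‖ + μ * l1 h

noncomputable def sqrtIstaStep (τ μ : ℝ) (q : EuclideanSpace ℝ (Fin d)) :
    EuclideanSpace ℝ (Fin d) :=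
  softThVec (2 * τ * μ * ‖A q - g‖) (q + τ • (ContinuousLinearMap.adjoint A) (g - A q))

theorem norm_sqrtIstaStep_sub_sq_add_le {τ μ : ℝ} (hτ : 0 ≤ τ) (hμ : 0 ≤ μ)
    (q u : EuclideanSpace ℝ (Fin d)) :
    ‖sqrtIstaStep A g τ μ q - u‖ ^ 2 + (1 - τ * ‖A‖ ^ 2) * ‖sqrtIstaStep A g τ μ q - q‖ ^ 2 ≤
      ‖q - u‖ ^ 2 + 2 * τ * ‖A q - g‖ *
        (sqrtLasso A g μ u - sqrtLasso A g μ (sqrtIstaStep A g τ μ q)) := by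
  set p := sqrtIstaStep A g τ μ q
  set σ := ‖A q - g‖
  have hprox : ⟪q - p, u - p⟫ + τ * ⟪g - A q, A u - A p⟫ ≤
      τ * μ * σ * l1 u - τ * μ * σ * l1 p := by
    have h : ⟪q + τ • (ContinuousLinearMap.adjoint A) (g - A q) - p, u - p⟫ ≤
        2 * τ * μ * σ / 2 * l1 u - 2 * τ * μ * σ / 2 * l1 p :=
      softThVec_variational_ineq (by positivity) _ u
    rw [add_sub_right_comm, inner_add_left, real_inner_smul_left,
      ContinuousLinearMap.adjoint_inner_left, map_sub] at h
    linarith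
  have hthree : 2 * ⟪q - p, u - p⟫ = ‖q - p‖ ^ 2 + ‖u - p‖ ^ 2 - ‖q - u‖ ^ 2 := by
    rw [← sub_sub_sub_cancel_right q u p, norm_sub_sq_real (q - p) (u - p)]
    ring
  have hsplit : ⟪g - A q, A u - A p⟫ = ⟪A q - g, A p - g⟫ - ⟪A q - g, A u - g⟫ := by
    rw [← neg_sub, inner_neg_left, ← sub_sub_sub_cancel_right (A u) (A p) g, inner_sub_right]
    ring
  have hu : ⟪A q - g, A u - g⟫ ≤ σ * ‖A u - g‖ := real_inner_le_norm _ _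
  -- `A` is `‖A‖`-Lipschitz, so the linearisation of the residual at `q` errs by `‖A‖²‖q - p‖²/2`
  have hp : σ * ‖A p - g‖ - ‖A‖ ^ 2 * ‖q - p‖ ^ 2 / 2 ≤ ⟪A q - g, A p - g⟫ := by
    have hlip : ‖(A q - g) - (A p - g)‖ ^ 2 ≤ ‖A‖ ^ 2 * ‖q - p‖ ^ 2 := by
      rw [sub_sub_sub_cancel_right, ← map_sub, ← mul_pow]
      gcongr
      exact A.le_opNorm _
    linarith [norm_mul_norm_sub_le_inner (A q - g) (A p - g)]
  have hτu := mul_le_mul_of_nonneg_left hu hτ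
  have hτp := mul_le_mul_of_nonneg_left hp hτ
  rw [hsplit] at hprox
  rw [norm_sub_rev p u, norm_sub_rev p q]
  simp only [sqrtLasso]
  linarith

theorem norm_sqrtIstaStep_sub_sq_le {τ μ : ℝ} (hτ : 0 ≤ τ) (hτA : τ * ‖A‖ ^ 2 ≤ 1) (hμ : 0 ≤ μ)
    (q u : EuclideanSpace ℝ (Fin d)) :
    ‖sqrtIstaStep A g τ μ q - u‖ ^ 2 ≤ ‖q - u‖ ^ 2 + 2 * τ * ‖A q - g‖ *
      (sqrtLasso A g μ u - sqrtLasso A g μ (sqrtIstaStep A g τ μ q)) := by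
  have := norm_sqrtIstaStep_sub_sq_add_le A g hτ hμ q u
  nlinarith [sq_nonneg ‖sqrtIstaStep A g τ μ q - q‖]

theorem sqrtLasso_sqrtIstaStep_le {τ μ : ℝ} (hτ : 0 < τ) (hτA : τ * ‖A‖ ^ 2 ≤ 1) (hμ : 0 ≤ μ)
    {q : EuclideanSpace ℝ (Fin d)} (hq : 0 < ‖A q - g‖) :
    sqrtLasso A g μ (sqrtIstaStep A g τ μ q) ≤ sqrtLasso A g μ q := by
  have h := norm_sqrtIstaStep_sub_sq_le A g hτ.le hτA hμ q q
  rw [sub_self, norm_zero, zero_pow two_ne_zero, zero_add] at h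
  have h2 := h.trans' (sq_nonneg _)
  have : 0 < 2 * τ * ‖A q - g‖ := by positivity
  nlinarith

end SqrtIsta

theorem sqrt_ista_rate_general {d m : ℕ} (τ μ : ℝ) (hμ : 0 < μ)
    (A : EuclideanSpace ℝ (Fin d) →L[ℝ] EuclideanSpace ℝ (Fin m))
    (g : EuclideanSpace ℝ (Fin m)) (hτ : 0 < τ) (hτ2 : τ ≤ 1 / ‖A‖ ^ 2)
    (f : ℕ → EuclideanSpace ℝ (Fin d)) (σ : ℕ → ℝ)
    (hσ : ∀ k, σ k = ‖A (f k) - g‖) (σmin : ℝ) (hσmin : 0 < σmin) (hσlb : ∀ k, σmin ≤ σ k)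
    (hiter : ∀ k, f (k + 1) =
      softThVec (2 * τ * μ * σ k) (f k + τ • (ContinuousLinearMap.adjoint A) (g - A (f k))))
    (fstar : EuclideanSpace ℝ (Fin d))
    (hmin : ∀ h, ‖A fstar - g‖ + μ * l1 fstar ≤ ‖A h - g‖ + μ * l1 h) :
    ∀ k : ℕ, 1 ≤ k →
      (‖A (f k) - g‖ + μ * l1 (f k)) - (‖A fstar - g‖ + μ * l1 fstar) ≤
        ‖f 0 - fstar‖ ^ 2 / (2 * τ * σmin * k) := by
  intro k hk
  set Φ := sqrtLasso A g μ
  have hτA : τ * ‖A‖ ^ 2 ≤ 1 := by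
    rcases (sq_nonneg ‖A‖).eq_or_lt with h | h
    · simp [← h]
    · exact (le_div_iff₀ h).mp hτ2
  have hstep j : f (j + 1) = sqrtIstaStep A g τ μ (f j) := by rw [hiter, hσ]; rfl
  have hgap j : 0 ≤ Φ (f j) - Φ fstar := sub_nonneg.mpr (hmin (f j))
  have hanti : Antitone fun j => 2 * τ * σmin * (Φ (f j) - Φ fstar) :=
    antitone_nat_of_succ_le fun j => by
      rw [hstep]
      gcongr
      exact sqrtLasso_sqrtIstaStep_le A g hτ hτA hμ.le (hσ j ▸ hσmin.trans_le (hσlb j))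
  have hdec j : 2 * τ * σmin * (Φ (f (j + 1)) - Φ fstar) ≤
      ‖f j - fstar‖ ^ 2 - ‖f (j + 1) - fstar‖ ^ 2 := by
    have h := norm_sqrtIstaStep_sub_sq_le A g hτ.le hτA hμ.le (f j) fstar
    rw [← hstep, ← hσ] at h
    have : 2 * τ * σmin * (Φ (f (j + 1)) - Φ fstar) ≤ 2 * τ * σ j * (Φ (f (j + 1)) - Φ fstar) := by
      gcongr
      exacts [hgap _, hσlb j]
    linarith
  have hsum := natCast_mul_le_sub_of_antitone hanti hdec k
  rw [le_div_iff₀ (by positivity)]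
  change (Φ (f k) - Φ fstar) * _ ≤ _
  nlinarith [sq_nonneg ‖f k - fstar‖]

theorem sqrt_ista_rate {d m : ℕ} (τ μ : ℝ) (hμ : 0 < μ)
    (A : EuclideanSpace ℝ (Fin d) →L[ℝ] EuclideanSpace ℝ (Fin m))
    (g : EuclideanSpace ℝ (Fin m)) (hτ : 0 < τ) (hτ2 : τ ≤ 1 / ‖A‖ ^ 2)
    (f : ℕ → EuclideanSpace ℝ (Fin d)) (σ : ℕ → ℝ)
    (hσ : ∀ k, σ k = ‖A (f k) - g‖) (σmin : ℝ) (hσmin : 0 < σmin) (hσlb : ∀ k, σmin ≤ σ k)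
    (hiter : ∀ k, f (k + 1) =
      softThVec (2 * τ * μ * σ k) (f k + τ • (ContinuousLinearMap.adjoint A) (g - A (f k))))
    (fstar : EuclideanSpace ℝ (Fin d))
    (hconv : Tendsto f atTop (𝓝 fstar))
    (hmin : ∀ h, ‖A fstar - g‖ + μ * l1 fstar ≤ ‖A h - g‖ + μ * l1 h) :
    ∀ k : ℕ, 1 ≤ k →
      (‖A (f k) - g‖ + μ * l1 (f k)) - (‖A fstar - g‖ + μ * l1 fstar) ≤
        ‖f 0 - fstar‖ ^ 2 / (2 * τ * σmin * k) :=
  sqrt_ista_rate_general τ μ hμ A g hτ hτ2 f σ hσ σmin hσmin hσlb hiter fstar hmin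
end

section
/- Let {f_k} be SQRT-ISTA iterates with 0 < τ ≤ 1/‖A‖² and σ_k > 0 for all k, and let f* be any global minimizer of Φ_μ. Then the distances are nonincreasing: ‖f_{k+1} - f*‖ ≤ ‖f_k - f*‖ for all k (Fejér monotonicity). -/
/-!
Soft thresholding with threshold `t / 2` is the proximal map of `(t / 2) ‖·‖₁`, so each
SQRT-ISTA step satisfies the variational inequality of a forward–backward step for the
square-root LASSO objective `Φ(h) = ‖A h - g‖ + μ ‖h‖₁`, linearised at `f k` with weight
`σ k = ‖A (f k) - g‖`. Expanding it gives, for every `h`,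
`‖f (k+1) - h‖² ≤ ‖f k - h‖² - (1 - τ‖A‖²) ‖f (k+1) - f k‖² + 2τ σ k (Φ h - Φ (f (k+1)))`,
and at a minimiser `h = f*` the last two terms are nonpositive.
-/

open scoped RealInnerProductSpace BigOperators
open Filter Topology

lemma softTh_prox_le {t : ℝ} (ht : 0 ≤ t) (x w : ℝ) :
    (x - softTh t x) * (w - softTh t x) ≤ t / 2 * (|w| - |softTh t x|) := by
  unfold softTh
  split_ifs with h_neg h_small
  · rw [abs_of_nonpos (by linarith : x + t / 2 ≤ 0)]
    nlinarith [neg_abs_le w]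
  · have ⟨hlo, hhi⟩ := abs_lt.mp h_small
    simp only [sub_zero, abs_zero]
    nlinarith [neg_abs_le w, le_abs_self w]
  · have hx : t / 2 ≤ x := by
      cases abs_cases x <;> linarith
    rw [abs_of_nonneg (by linarith : 0 ≤ x - t / 2)]
    nlinarith [le_abs_self w]

lemma softThVec_prox_le {d : ℕ} {t : ℝ} (ht : 0 ≤ t) (v w : EuclideanSpace ℝ (Fin d)) :
    ⟪v - softThVec t v, w - softThVec t v⟫ ≤ t / 2 * (l1 w - l1 (softThVec t v)) := by
  simp only [PiLp.inner_apply, RCLike.inner_apply, conj_trivial, l1, ← Finset.sum_sub_distrib,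
    Finset.mul_sum]
  exact Finset.sum_le_sum fun i _ => (mul_comm _ _).trans_le (softTh_prox_le ht (v i) (w i))

section ForwardBackward

variable {E F : Type*} [NormedAddCommGroup E] [InnerProductSpace ℝ E] [CompleteSpace E]
  [NormedAddCommGroup F] [InnerProductSpace ℝ F] [CompleteSpace F]

lemma inner_forward_step_sub (A : E →L[ℝ] F) (g : F) (τ : ℝ) (a b h : E) :
    ⟪a + τ • ContinuousLinearMap.adjoint A (g - A a) - b, h - b⟫ =
      ⟪a - b, h - b⟫ - τ * ⟪A a - g, A h - g⟫ + τ * ⟪A a - g, A b - g⟫ := by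
  have hAhb : A (h - b) = (A h - g) - (A b - g) := by rw [map_sub]; abel
  have hres : g - A a = -(A a - g) := by abel
  rw [add_sub_right_comm, inner_add_left, real_inner_smul_left,
    ContinuousLinearMap.adjoint_inner_left, hAhb, hres, inner_neg_left, inner_sub_right, inner_sub_right]
  ring

theorem sq_dist_le_of_forward_backward_step (A : E →L[ℝ] F) (g : F) (R : E → ℝ) {τ μ : ℝ}
    (hτ : 0 ≤ τ) (a b h : E)
    (hprox : ⟪a + τ • ContinuousLinearMap.adjoint A (g - A a) - b, h - b⟫ ≤
      τ * μ * ‖A a - g‖ * (R h - R b)) :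
    ‖b - h‖ ^ 2 ≤ ‖a - h‖ ^ 2 - (1 - τ * ‖A‖ ^ 2) * ‖b - a‖ ^ 2 +
      2 * τ * ‖A a - g‖ * ((‖A h - g‖ + μ * R h) - (‖A b - g‖ + μ * R b)) := by
  set s := ‖A a - g‖
  rw [inner_forward_step_sub] at hprox
  have h_three_point : 2 * ⟪a - b, h - b⟫ = ‖a - b‖ ^ 2 + ‖h - b‖ ^ 2 - ‖a - h‖ ^ 2 := by
    have := norm_sub_sq_real (a - b) (h - b)
    rw [sub_sub_sub_cancel_right] at this
    linarith
  have h_residuals : 2 * ⟪A a - g, A b - g⟫ = s ^ 2 + ‖A b - g‖ ^ 2 - ‖A (a - b)‖ ^ 2 := by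
    have := norm_sub_sq_real (A a - g) (A b - g)
    rw [sub_sub_sub_cancel_right, ← map_sub] at this
    linarith
  have h_cauchy : ⟪A a - g, A h - g⟫ ≤ s * ‖A h - g‖ := real_inner_le_norm _ _
  have h_opNorm : ‖A (a - b)‖ ^ 2 ≤ ‖A‖ ^ 2 * ‖a - b‖ ^ 2 := by
    rw [← mul_pow]; gcongr; exact A.le_opNorm _
  have h_amgm : 2 * s * ‖A b - g‖ ≤ s ^ 2 + ‖A b - g‖ ^ 2 := by
    nlinarith [sq_nonneg (s - ‖A b - g‖)]
  rw [norm_sub_rev b a, norm_sub_rev b h]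
  nlinarith [mul_le_mul_of_nonneg_left h_cauchy hτ, mul_le_mul_of_nonneg_left h_opNorm hτ,
    mul_le_mul_of_nonneg_left h_amgm hτ]

end ForwardBackward

lemma mul_sq_le_one_of_le_one_div_sq {τ a : ℝ} (hτ : τ ≤ 1 / a ^ 2) : τ * a ^ 2 ≤ 1 :=
  calc τ * a ^ 2 ≤ 1 / a ^ 2 * a ^ 2 := mul_le_mul_of_nonneg_right hτ (sq_nonneg a)
    _ ≤ 1 := by rw [one_div_mul_eq_div]; exact div_self_le_one _

theorem sqrt_ista_fejer_general {d m : ℕ} (τ μ : ℝ) (hμ : 0 < μ)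
    (A : EuclideanSpace ℝ (Fin d) →L[ℝ] EuclideanSpace ℝ (Fin m))
    (g : EuclideanSpace ℝ (Fin m)) (hτ : 0 < τ) (hτ2 : τ ≤ 1 / ‖A‖ ^ 2)
    (f : ℕ → EuclideanSpace ℝ (Fin d)) (σ : ℕ → ℝ)
    (hσ : ∀ k, σ k = ‖A (f k) - g‖)
    (hiter : ∀ k, f (k + 1) =
      softThVec (2 * τ * μ * σ k) (f k + τ • (ContinuousLinearMap.adjoint A) (g - A (f k))))
    (fstar : EuclideanSpace ℝ (Fin d))
    (hmin : ∀ h, ‖A fstar - g‖ + μ * l1 fstar ≤ ‖A h - g‖ + μ * l1 h) :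
    ∀ k, ‖f (k + 1) - fstar‖ ≤ ‖f k - fstar‖ := by
  intro k
  have hprox : ⟪f k + τ • ContinuousLinearMap.adjoint A (g - A (f k)) - f (k + 1),
      fstar - f (k + 1)⟫ ≤ τ * μ * ‖A (f k) - g‖ * (l1 fstar - l1 (f (k + 1))) := by
    have := softThVec_prox_le (t := 2 * τ * μ * σ k) (by rw [hσ k]; positivity)
      (f k + τ • ContinuousLinearMap.adjoint A (g - A (f k))) fstar
    rw [← hiter k, hσ k] at this
    linarith
  have hstep := sq_dist_le_of_forward_backward_step A g l1 hτ.le _ _ _ hprox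
  have hτA := mul_sq_le_one_of_le_one_div_sq hτ2
  have hdescent := mul_le_mul_of_nonneg_left (sub_nonpos.mpr (hmin (f (k + 1))))
    (by positivity : 0 ≤ 2 * τ * ‖A (f k) - g‖)
  refine (sq_le_sq₀ (norm_nonneg _) (norm_nonneg _)).mp ?_
  nlinarith [mul_nonneg (sub_nonneg.mpr hτA) (sq_nonneg ‖f (k + 1) - f k‖)]

theorem sqrt_ista_fejer {d m : ℕ} (τ μ : ℝ) (hμ : 0 < μ)
    (A : EuclideanSpace ℝ (Fin d) →L[ℝ] EuclideanSpace ℝ (Fin m))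
    (g : EuclideanSpace ℝ (Fin m)) (hτ : 0 < τ) (hτ2 : τ ≤ 1 / ‖A‖ ^ 2)
    (f : ℕ → EuclideanSpace ℝ (Fin d)) (σ : ℕ → ℝ)
    (hσ : ∀ k, σ k = ‖A (f k) - g‖) (hσpos : ∀ k, 0 < σ k)
    (hiter : ∀ k, f (k + 1) =
      softThVec (2 * τ * μ * σ k) (f k + τ • (ContinuousLinearMap.adjoint A) (g - A (f k))))
    (fstar : EuclideanSpace ℝ (Fin d))
    (hmin : ∀ h, ‖A fstar - g‖ + μ * l1 fstar ≤ ‖A h - g‖ + μ * l1 h) :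
    ∀ k, ‖f (k + 1) - fstar‖ ≤ ‖f k - fstar‖ :=
  sqrt_ista_fejer_general τ μ hμ A g hτ hτ2 f σ hσ hiter fstar hmin
end
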